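/- Let Q_q = [[b, b/a], [1, 0]] with a, b nonzero reals, and let ∘ denote the Hadamard (entrywise) product. For even n, det(Q_q^n ∘ Q_q^(−n)) = 1 + 2(b/a) q_n², where q_n is the n-th bi-periodic Fibonacci number. -/

import Mathlib

/-! For every invertible 2 × 2 matrix, `det (M ⊙ M⁻¹) = 1 + 2 M₀₁ M₁₀ / det M`. For `n = 2m`,
`Q^n = (b/a)^m • !![q_{n+1}, (b/a) q_n; q_n, q_{n-1}]` and `det Q^n = (-(b/a))^n = (b/a)^n`, so the
quotient is `2 (b/a) q_n²`. -/

/-- Bi-periodic Fibonacci sequence: q 0 = 0, q 1 = 1,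
    q n = a * q (n-1) + q (n-2) if n even, q n = b * q (n-1) + q (n-2) if n odd. -/
def bpFib (a b : ℝ) : ℕ → ℝ
  | 0 => 0
  | 1 => 1
  | n + 2 => (if Even (n + 2) then a else b) * bpFib a b (n + 1) + bpFib a b n

/-- Bi-periodic Lucas sequence: l 0 = 2, l 1 = a,
    l n = b * l (n-1) + l (n-2) if n even, l n = a * l (n-1) + l (n-2) if n odd. -/
def bpLucas (a b : ℝ) : ℕ → ℝ
  | 0 => 2
  | 1 => a
  | n + 2 => (if Even (n + 2) then b else a) * bpLucas a b (n + 1) + bpLucas a b n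

/- For an invertible 2 × 2 matrix `M`, `M ⊙ M⁻¹ = (det M)⁻¹ • !![ps, -qr; -qr, ps]`, whose
determinant is `(ps - qr)(ps + qr) / (det M)² = (ps + qr) / det M`. -/
theorem Matrix.det_hadamard_inv_fin_two {K : Type*} [Field K] (M : Matrix (Fin 2) (Fin 2) K)
    (hM : M.det ≠ 0) :
    (Matrix.hadamard M M⁻¹).det = 1 + 2 * M 0 1 * M 1 0 / M.det := by
  rw [Matrix.inv_def, Ring.inverse_eq_inv', Matrix.adjugate_fin_two]
  rw [Matrix.det_fin_two] at hM ⊢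
  simp only [Matrix.hadamard, Matrix.smul_apply, Matrix.of_apply, Matrix.cons_val',
    Matrix.cons_val_zero, Matrix.cons_val_one, Matrix.empty_val',
    Matrix.cons_val_fin_one, smul_eq_mul, Matrix.det_fin_two]
  field_simp
  ring

lemma bpFib_two_mul_add_two (a b : ℝ) (m : ℕ) :
    bpFib a b (2 * m + 2) = a * bpFib a b (2 * m + 1) + bpFib a b (2 * m) := by
  rw [bpFib, if_pos (by simp [Nat.even_add])]

lemma bpFib_two_mul_add_three (a b : ℝ) (m : ℕ) :
    bpFib a b (2 * m + 3) = b * bpFib a b (2 * m + 2) + bpFib a b (2 * m + 1) := by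
  rw [show 2 * m + 3 = 2 * m + 1 + 2 by ring, bpFib, if_neg (by simp [Nat.even_add])]

/- The lower-right entry is `q_{2m-1}`, written through the recurrence so that it makes
sense at `m = 0`. -/
lemma bpFibMatrix_pow_two_mul (a b : ℝ) (ha : a ≠ 0) (m : ℕ) :
    (!![b, b / a; 1, 0] : Matrix (Fin 2) (Fin 2) ℝ) ^ (2 * m) =
      (b / a) ^ m • !![bpFib a b (2 * m + 1), b / a * bpFib a b (2 * m);
        bpFib a b (2 * m), bpFib a b (2 * m + 1) - b * bpFib a b (2 * m)] := by
  induction m with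
  | zero => ext i j; fin_cases i <;> fin_cases j <;> simp [bpFib]
  | succ m ih =>
    rw [show 2 * (m + 1) = 2 * m + 2 by ring, pow_add, ih, bpFib_two_mul_add_three,
      bpFib_two_mul_add_two]
    ext i j
    fin_cases i <;> fin_cases j <;>
      simp [Matrix.mul_apply, Fin.sum_univ_two, pow_succ] <;> field_simp <;> ring

theorem hadamard_det_even (a b : ℝ) (ha : a ≠ 0) (hb : b ≠ 0) (n : ℕ) (h : Even n) :
    (Matrix.hadamard ((!![b, b / a; 1, 0] : Matrix (Fin 2) (Fin 2) ℝ) ^ n)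
        (((!![b, b / a; 1, 0] : Matrix (Fin 2) (Fin 2) ℝ) ^ n)⁻¹)).det =
      1 + 2 * (b / a) * (bpFib a b n) ^ 2 := by
  obtain ⟨m, rfl⟩ := h
  rw [← two_mul]
  have hdet :
      ((!![b, b / a; 1, 0] : Matrix (Fin 2) (Fin 2) ℝ) ^ (2 * m)).det = (b / a) ^ (2 * m) := by
    rw [Matrix.det_pow, Matrix.det_fin_two_of, pow_mul, pow_mul]
    ring
  have ht : b / a ≠ 0 := div_ne_zero hb ha
  rw [Matrix.det_hadamard_inv_fin_two _ (hdet ▸ pow_ne_zero _ ht), hdet,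
    bpFibMatrix_pow_two_mul a b ha m]
  simp only [Matrix.smul_apply, Matrix.of_apply, Matrix.cons_val', Matrix.cons_val_zero,
    Matrix.cons_val_one, Matrix.empty_val', Matrix.cons_val_fin_one, smul_eq_mul]
  field_simp
  ring
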